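/- In the setting of the previous functions γ_min, γ_max on S¹ (defined from palindromic coprime A, B with P̃A + Q̃B = 1, where for every z ∈ S¹ at least one of A(z), B(z) is positive): the functions z ↦ arctan(γ_max(z)) and z ↦ arctan(γ_min(z)) from S¹ to [−π/2, π/2] are continuous, where arctan(+∞) := π/2 and arctan(−∞) := −π/2. -/

import Mathlib

/-!
On the unit circle `conj z = z⁻¹`, so palindromic Laurent polynomials are real there and the
Bezout identity reads `P̃ A + Q̃ B = 1` in `ℝ`. At a zero of `B` on the circle, `A > 0`, so
`P̃ = 1 / A > 0`, and near such a point `arctan (P̃ / B) = π / 2 - arctan (max B 0 / P̃)`, which is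
continuous. `arctan ∘ γ_min` is minus the same construction with `(A, P̃)` and `(B, Q̃)` swapped.
-/

open LaurentPolynomial Real

noncomputable def lEval (p : LaurentPolynomial ℝ) (z : ℂ) : ℂ :=
  Finsupp.sum p.coeff fun n a => (a : ℂ) * z ^ n

def Palindromic (p : LaurentPolynomial ℝ) : Prop := invert p = p

/-- `arctan(γ_max(z))`, where `γ_max(z) = P̃(z)/B(z)` if `B(z) > 0` and `+∞`
(so `arctan` of it equals `π/2`) otherwise. -/
noncomputable def arctanGammaMax (Pt B : LaurentPolynomial ℝ) (z : ℂ) : ℝ :=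
  if 0 < (lEval B z).re then Real.arctan ((lEval Pt z).re / (lEval B z).re) else π / 2

/-- `arctan(γ_min(z))`, where `γ_min(z) = -Q̃(z)/A(z)` if `A(z) > 0` and `-∞`
(so `arctan` of it equals `-π/2`) otherwise. -/
noncomputable def arctanGammaMin (Qt A : LaurentPolynomial ℝ) (z : ℂ) : ℝ :=
  if 0 < (lEval A z).re then Real.arctan (-(lEval Qt z).re / (lEval A z).re) else -(π / 2)

lemma lEval_eq_eval₂ (p : LaurentPolynomial ℝ) {z : ℂ} (hz : z ≠ 0) :
    lEval p z = eval₂ (algebraMap ℝ ℂ) (Units.mk0 z hz) p := by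
  induction p using LaurentPolynomial.induction_on' with
  | add p q hp hq =>
    rw [map_add, ← hp, ← hq, lEval, lEval, lEval, AddMonoidAlgebra.coeff_add,
      Finsupp.sum_add_index (by simp) (by intros; push_cast; ring)]
  | C_mul_T n r =>
    rw [← single_eq_C_mul_T, lEval, AddMonoidAlgebra.coeff_single,
      Finsupp.sum_single_index (by simp), single_eq_C_mul_T, eval₂_C_mul_T]
    simp

lemma lEval_invert (p : LaurentPolynomial ℝ) (z : ℂ) :
    lEval (invert p) z = lEval p z⁻¹ := by
  have h : (invert p).coeff = Finsupp.mapDomain Neg.neg p.coeff := by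
    ext n
    rw [invert_apply, ← neg_neg n, Finsupp.mapDomain_apply neg_injective, neg_neg]
  rw [lEval, h, Finsupp.sum_mapDomain_index_inj neg_injective, lEval]
  exact Finsupp.sum_congr fun n _ => by rw [zpow_neg, inv_zpow]

lemma conj_lEval (p : LaurentPolynomial ℝ) (z : ℂ) :
    starRingEnd ℂ (lEval p z) = lEval p (starRingEnd ℂ z) := by
  rw [lEval, map_finsuppSum, lEval]
  exact Finsupp.sum_congr fun n _ => by rw [map_mul, map_zpow₀, Complex.conj_ofReal]

lemma Palindromic.im_lEval_eq_zero {p : LaurentPolynomial ℝ} (hp : Palindromic p) {z : ℂ}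
    (hz : ‖z‖ = 1) : (lEval p z).im = 0 := by
  refine Complex.conj_eq_iff_im.mp ?_
  rw [conj_lEval, ← Complex.inv_eq_conj hz, ← lEval_invert, hp]

lemma continuousAt_lEval (p : LaurentPolynomial ℝ) {z : ℂ} (hz : z ≠ 0) :
    ContinuousAt (lEval p) z := by
  unfold lEval Finsupp.sum
  fun_prop (disch := exact Or.inl hz)

lemma re_lEval_bezout {A B Pt Qt : LaurentPolynomial ℝ} (hPt : Palindromic Pt)
    (hQt : Palindromic Qt) (hbez : Pt * A + Qt * B = 1) {z : ℂ} (hz : ‖z‖ = 1) :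
    (lEval Pt z).re * (lEval A z).re + (lEval Qt z).re * (lEval B z).re = 1 := by
  have hz0 : z ≠ 0 := norm_ne_zero_iff.mp (hz ▸ one_ne_zero)
  have h := congrArg (fun p => (eval₂ (algebraMap ℝ ℂ) (Units.mk0 z hz0) p).re) hbez
  simp only [map_add, map_mul, map_one, ← lEval_eq_eval₂, Complex.add_re, Complex.mul_re,
    hPt.im_lEval_eq_zero hz, hQt.im_lEval_eq_zero hz, Complex.one_re] at h
  linarith

lemma ite_arctan_div_eq {p : ℝ} (hp : 0 < p) (b : ℝ) :
    (if 0 < b then arctan (p / b) else π / 2) = π / 2 - arctan (max b 0 / p) := by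
  split_ifs with hb
  · rw [max_eq_left hb.le, ← arctan_inv_of_pos (div_pos hb hp), inv_div]
  · rw [max_eq_right (not_lt.mp hb), zero_div, arctan_zero, sub_zero]

lemma continuousAt_ite_arctan_div {X : Type*} [TopologicalSpace X] {p b : X → ℝ} {x : X}
    (hp : ContinuousAt p x) (hb : ContinuousAt b x) (h : b x = 0 → 0 < p x) :
    ContinuousAt (fun y => if 0 < b y then arctan (p y / b y) else π / 2) x := by
  by_cases hbx : 0 < b x
  · refine (continuous_arctan.continuousAt.comp (hp.div hb hbx.ne')).congr ?_
    filter_upwards [continuousAt_const.eventually_lt hb hbx] with y hy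
    simp [hy]
  by_cases hpx : 0 < p x
  · have hcont : ContinuousAt (fun y => π / 2 - arctan (max (b y) 0 / p y)) x :=
      continuousAt_const.sub <| continuous_arctan.continuousAt.comp <|
        (hb.max continuousAt_const).div hp hpx.ne'
    refine hcont.congr ?_
    filter_upwards [continuousAt_const.eventually_lt hp hpx] with y hy
    exact (ite_arctan_div_eq hy (b y)).symm
  · have hneg : b x < 0 := (not_lt.mp hbx).lt_of_ne fun h0 => hpx (h h0)
    refine (continuousAt_const (y := π / 2)).congr ?_
    filter_upwards [hb.eventually_lt continuousAt_const hneg] with y hy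
    simp [not_lt.mpr hy.le]

lemma continuousAt_arctanGammaMax {A B Pt Qt : LaurentPolynomial ℝ} (hPt : Palindromic Pt)
    (hQt : Palindromic Qt) (hbez : Pt * A + Qt * B = 1)
    (hpos : ∀ z : ℂ, ‖z‖ = 1 → 0 < (lEval A z).re ∨ 0 < (lEval B z).re)
    {z : ℂ} (hz : ‖z‖ = 1) : ContinuousAt (arctanGammaMax Pt B) z := by
  have hz0 : z ≠ 0 := norm_ne_zero_iff.mp (hz ▸ one_ne_zero)
  refine continuousAt_ite_arctan_div (Complex.continuous_re.continuousAt.comp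
    (continuousAt_lEval Pt hz0)) (Complex.continuous_re.continuousAt.comp
    (continuousAt_lEval B hz0)) fun hB0 => ?_
  have hA : 0 < (lEval A z).re := (hpos z hz).resolve_right fun h => h.ne' hB0
  have hPA : (lEval Pt z).re * (lEval A z).re = 1 := by
    simpa [hB0] using re_lEval_bezout hPt hQt hbez hz
  exact pos_of_mul_pos_left (hPA ▸ one_pos) hA.le

lemma continuousOn_arctanGammaMax {A B Pt Qt : LaurentPolynomial ℝ} (hPt : Palindromic Pt)
    (hQt : Palindromic Qt) (hbez : Pt * A + Qt * B = 1)
    (hpos : ∀ z : ℂ, ‖z‖ = 1 → 0 < (lEval A z).re ∨ 0 < (lEval B z).re) :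
    ContinuousOn (arctanGammaMax Pt B) (Metric.sphere 0 1) := fun _ hz =>
  (continuousAt_arctanGammaMax hPt hQt hbez hpos
    (mem_sphere_zero_iff_norm.mp hz)).continuousWithinAt

lemma arctanGammaMin_eq_neg_arctanGammaMax (Qt A : LaurentPolynomial ℝ) :
    arctanGammaMin Qt A = -arctanGammaMax Qt A := by
  ext z
  simp only [arctanGammaMin, arctanGammaMax, Pi.neg_apply]
  split_ifs <;> simp [neg_div, arctan_neg]

theorem arctan_gamma_continuous_general
    (A B Pt Qt : LaurentPolynomial ℝ)
    (hPt : Palindromic Pt) (hQt : Palindromic Qt)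
    (hbez : Pt * A + Qt * B = 1)
    (hpos : ∀ z : ℂ, ‖z‖ = 1 → 0 < (lEval A z).re ∨ 0 < (lEval B z).re) :
    Continuous (fun z : Metric.sphere (0 : ℂ) 1 => arctanGammaMax Pt B z) ∧
    Continuous (fun z : Metric.sphere (0 : ℂ) 1 => arctanGammaMin Qt A z) := by
  have hmax := continuousOn_arctanGammaMax hPt hQt hbez hpos
  have hswap := continuousOn_arctanGammaMax hQt hPt ((add_comm _ _).trans hbez)
    fun z hz => (hpos z hz).symm
  rw [arctanGammaMin_eq_neg_arctanGammaMax]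
  exact ⟨hmax.domRestrict, hswap.neg.domRestrict⟩

/-- In the setting of the Bezout identity `P̃A + Q̃B = 1` with `A`, `B` palindromic
and coprime, and at least one of `A(z)`, `B(z)` positive at each point of `S¹`,
the functions `arctan ∘ γ_max` and `arctan ∘ γ_min` are continuous on `S¹`. -/
theorem arctan_gamma_continuous
    (A B Pt Qt : LaurentPolynomial ℝ)
    (hA : Palindromic A) (hB : Palindromic B)
    (hPt : Palindromic Pt) (hQt : Palindromic Qt)
    (hcop : IsCoprime A B)
    (hbez : Pt * A + Qt * B = 1)
    (hpos : ∀ z : ℂ, ‖z‖ = 1 → 0 < (lEval A z).re ∨ 0 < (lEval B z).re) :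
    Continuous (fun z : Metric.sphere (0 : ℂ) 1 => arctanGammaMax Pt B z) ∧
    Continuous (fun z : Metric.sphere (0 : ℂ) 1 => arctanGammaMin Qt A z) :=
  arctan_gamma_continuous_general A B Pt Qt hPt hQt hbez hpos
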